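/- Suppose a⁻ > 0 and a⁺ > 0. Then there exists a constant M > 0, depending only on a⁻, a⁺ and sup_{u ∈ [−1,1]} |V(u)|, such that for all κ ≥ 1 and all r ≥ 2, |T̃₀(κ) − (r−1)/a⁺| ≤ M·κ². (Thus when the noise is large relative to the smoothing, the mean escape time in a crossing region is r/a⁺ to leading order, independently of the smoothing function.) -/

import Mathlib

open MeasureTheory Real Set

/-!
Write `c = 2 / κ²`. On `[1, r]` the potential is linear with slope `-a⁺`, so there the inner
integral is explicit: `e^{cV(v)} ∫_1^v e^{-cV(u)} du = (1 - e^{-c a⁺ (v - 1)}) / (c a⁺)`, which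
integrates over `[1, r]` to `(r - 1) / (c a⁺)` up to an error of at most `1 / (c a⁺)²`. All other
contributions are `O(1 / c)`: on `[-r, -1]` the potential grows linearly, so
`∫_{-r}^{-1} e^{-cV} ≤ 1 / (c a⁻)`; on `[-1, 1]`, `e^{±cV} ≤ e^{2B}` once `c ≤ 2` and `|V| ≤ B`;
and `∫_1^r e^{cV} ≤ e^{2B} / (c a⁺)`. Multiplying by `c` gives `(r - 1) / a⁺ + O(1 / c)`,
i.e. `(r - 1) / a⁺ + O(κ²)`.
-/

theorem integral_exp_mul_sub (l p a b : ℝ) (hl : l ≠ 0) :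
    ∫ x in a..b, exp (l * (x - p)) = (exp (l * (b - p)) - exp (l * (a - p))) / l := by
  have hderiv : ∀ x ∈ uIcc a b,
      HasDerivAt (fun y => exp (l * (y - p)) / l) (exp (l * (x - p))) x := fun x _ => by
    simpa [mul_div_cancel_right₀ _ hl] using
      (((hasDerivAt_id x).sub_const p).const_mul l).exp.div_const l
  exact intervalIntegral.integral_eq_sub_of_hasDerivAt hderiv
    (Continuous.intervalIntegrable (by fun_prop) a b) |>.trans (by ring)

theorem continuous_ite_Icc {a b : ℝ} {A : ℝ → ℝ} (hab : a ≤ b)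
    (hA : ContinuousOn A (Icc a b)) :
    Continuous fun u => if u ≤ a then A a else if u < b then A u else A b := by
  have hclamp : (fun u => if u ≤ a then A a else if u < b then A u else A b)
      = fun u => A (max a (min b u)) := by
    funext u
    split_ifs with h₁ h₂
    · rw [min_eq_right (h₁.trans hab), max_eq_left h₁]
    · rw [min_eq_right h₂.le, max_eq_right (not_le.1 h₁).le]
    · rw [min_eq_left (not_lt.1 h₂), max_eq_right hab]
  rw [hclamp]
  exact hA.comp_continuous (by fun_prop)
    fun u => ⟨le_max_left _ _, max_le hab (min_le_left _ _)⟩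

theorem neg_integral_eq_sub_of_eqOn_const {φ : ℝ → ℝ} (hφ : Continuous φ) {k p x y : ℝ}
    (hk : ∀ u ∈ uIcc x y, φ u = k) :
    -∫ v in p..y, φ v = (-∫ v in p..x, φ v) - k * (y - x) := by
  rw [← intervalIntegral.integral_add_adjacent_intervals (b := x)
      (hφ.intervalIntegrable _ _) (hφ.intervalIntegrable _ _),
    intervalIntegral.integral_congr hk, intervalIntegral.integral_const, smul_eq_mul]
  ring

theorem exp_mul_le_exp_two_mul {c x B : ℝ} (hc : 0 ≤ c) (hc2 : c ≤ 2) (hx : |x| ≤ B) :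
    exp (c * x) ≤ exp (2 * B) := by
  exact exp_le_exp.2 (by nlinarith [le_abs_self x, abs_nonneg x])

theorem integral_exp_neg_mul_sub_le {l a b : ℝ} (hl : 0 < l) :
    ∫ x in a..b, exp (-l * (x - a)) ≤ 1 / l := by
  rw [integral_exp_mul_sub _ _ _ _ (neg_ne_zero.2 hl.ne'), sub_self, mul_zero, exp_zero, div_neg,
    ← neg_div, neg_sub]
  gcongr
  linarith [exp_pos (-l * (b - a))]

section EscapeTime

variable {V : ℝ → ℝ} {am ap B c r : ℝ}

theorem integral_exp_neg_mul_potential_le (hVc : Continuous V)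
    (hVl : ∀ u ≤ -1, V u = -am * (u + 1)) (hVB : ∀ x ∈ Icc (-1 : ℝ) 1, |V x| ≤ B)
    (hc : 0 < c) (hc2 : c ≤ 2) (ham : 0 < am) (hr : 1 ≤ r) :
    ∫ u in -r..1, exp (-c * V u) ≤ 1 / (c * am) + 2 * exp (2 * B) := by
  have hint : ∀ a b : ℝ, IntervalIntegrable (fun u => exp (-c * V u)) volume a b :=
    fun a b => Continuous.intervalIntegrable (by fun_prop) a b
  have htail : ∫ u in -r..(-1), exp (-c * V u) ≤ 1 / (c * am) := by
    rw [intervalIntegral.integral_congr (g := fun u => exp (c * am * (u - -1))) fun u hu => by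
        rw [uIcc_of_le (by linarith)] at hu
        simp only [hVl u hu.2]; ring_nf,
      integral_exp_mul_sub _ _ _ _ (by positivity), sub_self, mul_zero, exp_zero]
    gcongr
    linarith [exp_pos (c * am * (-r - -1))]
  have hcore : ∫ u in (-1)..1, exp (-c * V u) ≤ 2 * exp (2 * B) := by
    calc ∫ u in (-1)..1, exp (-c * V u) ≤ ∫ _ in (-1 : ℝ)..1, exp (2 * B) := by
          refine intervalIntegral.integral_mono_on (by norm_num) (hint _ _) (by simp) fun u hu => ?_
          rw [neg_mul_comm]
          exact exp_mul_le_exp_two_mul hc.le hc2 (by simpa using hVB u hu)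
      _ = 2 * exp (2 * B) := by norm_num
  rw [← intervalIntegral.integral_add_adjacent_intervals (hint _ _) (hint _ _)]
  exact add_le_add htail hcore

theorem exp_mul_potential_mul_integral_eq (hVr : ∀ v ≥ 1, V v = V 1 - ap * (v - 1))
    (hc : 0 < c) (hap : 0 < ap) {v : ℝ} (hv : 1 ≤ v) :
    exp (c * V v) * ∫ u in (1 : ℝ)..v, exp (-c * V u)
      = (1 - exp (-(c * ap) * (v - 1))) / (c * ap) := by
  rw [intervalIntegral.integral_congr (g := fun u => exp (-c * V 1) * exp (c * ap * (u - 1)))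
      fun u hu => by
        rw [uIcc_of_le hv] at hu
        simp only [hVr u hu.1, ← exp_add]; ring_nf,
    intervalIntegral.integral_const_mul, integral_exp_mul_sub _ _ _ _ (by positivity), hVr v hv,
    sub_self, mul_zero, exp_zero]
  have hcancel : exp (c * (V 1 - ap * (v - 1))) * exp (-c * V 1) * exp (c * ap * (v - 1)) = 1 := by
    rw [← exp_add, ← exp_add, ← exp_zero]; ring_nf
  have hdecay : exp (c * (V 1 - ap * (v - 1))) * exp (-c * V 1) = exp (-(c * ap) * (v - 1)) := by
    rw [← exp_add]; ring_nf
  linear_combination (hcancel - hdecay) / (c * ap)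

theorem integral_exp_mul_potential_le (hVr : ∀ v ≥ 1, V v = V 1 - ap * (v - 1))
    (hVB : ∀ x ∈ Icc (-1 : ℝ) 1, |V x| ≤ B) (hc : 0 < c) (hc2 : c ≤ 2) (hap : 0 < ap)
    (hr : 1 ≤ r) :
    ∫ v in (1 : ℝ)..r, exp (c * V v) ≤ exp (2 * B) / (c * ap) := by
  rw [intervalIntegral.integral_congr (g := fun v => exp (c * V 1) * exp (-(c * ap) * (v - 1)))
      fun v hv => by
        rw [uIcc_of_le hr] at hv
        simp only [hVr v hv.1, ← exp_add]; ring_nf,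
    intervalIntegral.integral_const_mul, div_eq_mul_one_div]
  exact mul_le_mul (exp_mul_le_exp_two_mul hc.le hc2 (hVB 1 (by norm_num)))
    (integral_exp_neg_mul_sub_le (by positivity))
    (intervalIntegral.integral_nonneg hr fun _ _ => (exp_pos _).le) (exp_pos _).le

theorem integral_exp_mul_potential_mul_integral_eq (hVc : Continuous V)
    (hVr : ∀ v ≥ 1, V v = V 1 - ap * (v - 1)) (hc : 0 < c) (hap : 0 < ap) (hr : 1 ≤ r) :
    ∫ v in (0 : ℝ)..r, exp (c * V v) * ∫ u in -r..v, exp (-c * V u)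
      = (∫ v in (0 : ℝ)..1, exp (c * V v) * ∫ u in -r..v, exp (-c * V u))
        + (∫ v in (1 : ℝ)..r, exp (c * V v)) * (∫ u in -r..1, exp (-c * V u))
        + ((r - 1) - ∫ v in (1 : ℝ)..r, exp (-(c * ap) * (v - 1))) / (c * ap) := by
  have hint : ∀ a b : ℝ, IntervalIntegrable (fun u => exp (-c * V u)) volume a b :=
    fun a b => Continuous.intervalIntegrable (by fun_prop) a b
  have hprim : Continuous fun v => ∫ u in -r..v, exp (-c * V u) :=
    intervalIntegral.continuous_primitive hint _
  have hright : EqOn (fun v => exp (c * V v) * ∫ u in -r..v, exp (-c * V u))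
      (fun v => exp (c * V v) * (∫ u in -r..1, exp (-c * V u))
        + (1 - exp (-(c * ap) * (v - 1))) / (c * ap)) (uIcc 1 r) := fun v hv => by
    rw [uIcc_of_le hr] at hv
    dsimp only
    rw [← intervalIntegral.integral_add_adjacent_intervals (hint (-r) 1) (hint 1 v), mul_add,
      exp_mul_potential_mul_integral_eq hVr hc hap hv.1]
  rw [← intervalIntegral.integral_add_adjacent_intervals (b := 1)
      (Continuous.intervalIntegrable (by fun_prop) _ _)
      (Continuous.intervalIntegrable (by fun_prop) _ _),
    intervalIntegral.integral_congr hright,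
    intervalIntegral.integral_add (Continuous.intervalIntegrable (by fun_prop) _ _)
      (Continuous.intervalIntegrable (by fun_prop) _ _),
    intervalIntegral.integral_mul_const, intervalIntegral.integral_div,
    intervalIntegral.integral_sub intervalIntegrable_const
      (Continuous.intervalIntegrable (by fun_prop) _ _),
    intervalIntegral.integral_const, smul_eq_mul, mul_one, add_assoc]

theorem abs_mul_integral_exp_mul_potential_sub_le (hVc : Continuous V)
    (hVl : ∀ u ≤ -1, V u = -am * (u + 1)) (hVr : ∀ v ≥ 1, V v = V 1 - ap * (v - 1))
    (hVB : ∀ x ∈ Icc (-1 : ℝ) 1, |V x| ≤ B) (hc : 0 < c) (hc2 : c ≤ 2) (ham : 0 < am)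
    (hap : 0 < ap) (hr : 1 ≤ r) :
    |c * (∫ v in (0 : ℝ)..r, exp (c * V v) * ∫ u in -r..v, exp (-c * V u)) - (r - 1) / ap|
      ≤ (exp (2 * B) * (1 / am + 4 * exp (2 * B)) * (2 + 1 / ap) + 1 / ap ^ 2) / c := by
  have hint : ∀ a b : ℝ, IntervalIntegrable (fun u => exp (-c * V u)) volume a b :=
    fun a b => Continuous.intervalIntegrable (by fun_prop) a b
  rw [integral_exp_mul_potential_mul_integral_eq hVc hVr hc hap hr]
  set E := exp (2 * B)
  set F₁ := ∫ u in -r..1, exp (-c * V u) with hF₁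
  set X := ∫ v in (0 : ℝ)..1, exp (c * V v) * ∫ u in -r..v, exp (-c * V u)
  set Y := ∫ v in (1 : ℝ)..r, exp (c * V v)
  set Q := ∫ v in (1 : ℝ)..r, exp (-(c * ap) * (v - 1))
  have hprim : ∀ v, -r ≤ v → v ≤ 1 →
      0 ≤ ∫ u in -r..v, exp (-c * V u) ∧ ∫ u in -r..v, exp (-c * V u) ≤ F₁ :=
    fun v hrv hv1 => by
    refine ⟨intervalIntegral.integral_nonneg hrv fun _ _ => (exp_pos _).le, ?_⟩
    rw [hF₁, ← intervalIntegral.integral_add_adjacent_intervals (hint (-r) v) (hint v 1),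
      le_add_iff_nonneg_right]
    exact intervalIntegral.integral_nonneg hv1 fun _ _ => (exp_pos _).le
  have hF₁_nonneg : 0 ≤ F₁ := (hprim 1 (by linarith) le_rfl).1
  have hF₁_le : F₁ ≤ 1 / (c * am) + 2 * E :=
    integral_exp_neg_mul_potential_le hVc hVl hVB hc hc2 ham hr
  have hX_nonneg : 0 ≤ X := intervalIntegral.integral_nonneg zero_le_one fun v hv =>
    mul_nonneg (exp_pos _).le (hprim v (by linarith [hv.1]) hv.2).1
  have hX_le : X ≤ E * F₁ := by
    calc X ≤ ∫ _ in (0 : ℝ)..1, E * F₁ := by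
          refine intervalIntegral.integral_mono_on zero_le_one
            (Continuous.intervalIntegrable ?_ _ _) (by simp) fun v hv => ?_
          · exact (by fun_prop : Continuous fun v => exp (c * V v)).mul
              (intervalIntegral.continuous_primitive hint _)
          · have hv' : v ∈ Icc (-1 : ℝ) 1 := ⟨by linarith [hv.1], hv.2⟩
            have := hprim v (by linarith [hv.1]) hv.2
            exact mul_le_mul (exp_mul_le_exp_two_mul hc.le hc2 (hVB v hv'))
              this.2 this.1 (exp_pos _).le
      _ = E * F₁ := by simp
  have hY_nonneg : 0 ≤ Y := intervalIntegral.integral_nonneg hr fun _ _ => (exp_pos _).le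
  have hY_le : Y ≤ E / (c * ap) := integral_exp_mul_potential_le hVr hVB hc hc2 hap hr
  have hQ_nonneg : 0 ≤ Q := intervalIntegral.integral_nonneg hr fun _ _ => (exp_pos _).le
  have hQ_le : Q ≤ 1 / (c * ap) := integral_exp_neg_mul_sub_le (by positivity)
  have hdecomp : c * (X + Y * F₁ + ((r - 1) - Q) / (c * ap)) - (r - 1) / ap
      = c * (X + Y * F₁) - Q / ap := by
    field_simp
    ring
  have hfirst : c * (X + Y * F₁) ≤ E * (1 / am + 4 * E) * (2 + 1 / ap) / c := by
    have hsum : X + Y * F₁ ≤ (E + E / (c * ap)) * (1 / (c * am) + 2 * E) := by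
      calc X + Y * F₁ ≤ (E + Y) * F₁ := by linarith
        _ ≤ _ := mul_le_mul (by linarith) hF₁_le hF₁_nonneg (by positivity)
    calc c * (X + Y * F₁) ≤ c * ((E + E / (c * ap)) * (1 / (c * am) + 2 * E)) := by gcongr
      _ = E * (1 / am + 2 * c * E) * (c + 1 / ap) / c := by field_simp
      _ ≤ E * (1 / am + 4 * E) * (2 + 1 / ap) / c := by gcongr; linarith [exp_pos (2 * B)]
  have hlast : Q / ap ≤ 1 / ap ^ 2 / c := by
    calc Q / ap ≤ 1 / (c * ap) / ap := by gcongr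
      _ = 1 / ap ^ 2 / c := by field_simp
  have hfirst_nonneg : 0 ≤ c * (X + Y * F₁) := by positivity
  have hlast_nonneg : 0 ≤ Q / ap := by positivity
  have hbound_nonneg : 0 ≤ E * (1 / am + 4 * E) * (2 + 1 / ap) / c := by positivity
  have hconst_nonneg : 0 ≤ 1 / ap ^ 2 / c := by positivity
  rw [hdecomp, abs_le, add_div]
  constructor <;> linarith

end EscapeTime

/-- Large-noise mean escape time from a crossing region: `T̃₀(κ) = (r-1)/a⁺ + O(κ²)`
uniformly in `r ≥ 2`, for `κ ≥ 1`. -/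
theorem stmt10
    (aminus aplus : ℝ) (A : ℝ → ℝ)
    (hAcont : ContinuousOn A (Set.Icc (-1) 1))
    (hAm : A (-1) = aminus) (hAp : A 1 = aplus)
    (φ : ℝ → ℝ)
    (hφ : ∀ u : ℝ, φ u = if u ≤ -1 then aminus else if u < 1 then A u else aplus)
    (V : ℝ → ℝ)
    (hV : ∀ x : ℝ, V x = -∫ v in (-1:ℝ)..x, φ v)
    (ham : 0 < aminus) (hap : 0 < aplus) :
    ∃ M > (0:ℝ), ∀ κ r : ℝ, 1 ≤ κ → 2 ≤ r →
      |2 / κ ^ 2 * (∫ v in (0:ℝ)..r, Real.exp (2 * V v / κ ^ 2) *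
          ∫ u in (-r)..v, Real.exp (-2 * V u / κ ^ 2)) - (r - 1) / aplus|
        ≤ M * κ ^ 2 := by
  have hφc : Continuous φ := by
    rw [funext hφ, ← hAm, ← hAp]
    exact continuous_ite_Icc (by norm_num) hAcont
  have hVc : Continuous V := by
    rw [funext hV]
    exact (intervalIntegral.continuous_primitive (hφc.intervalIntegrable · ·) _).neg
  have hVl : ∀ u ≤ -1, V u = -aminus * (u + 1) := fun u hu => by
    rw [hV, neg_integral_eq_sub_of_eqOn_const hφc (k := aminus) (x := -1) fun x hx => ?_,
      intervalIntegral.integral_same]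
    · ring
    · rw [uIcc_of_ge hu] at hx
      rw [hφ, if_pos hx.2]
  have hVr : ∀ v ≥ 1, V v = V 1 - aplus * (v - 1) := fun v hv => by
    rw [hV, hV, neg_integral_eq_sub_of_eqOn_const hφc (k := aplus) (x := 1) fun x hx => ?_]
    rw [uIcc_of_le hv] at hx
    rw [hφ, if_neg (by linarith [hx.1]), if_neg (not_lt.2 hx.1)]
  obtain ⟨B, hB⟩ :=
    isCompact_Icc.exists_bound_of_continuousOn (hVc.continuousOn (s := Icc (-1 : ℝ) 1))
  refine ⟨exp (2 * B) * (1 / aminus + 4 * exp (2 * B)) * (2 + 1 / aplus) + 1 / aplus ^ 2,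
    by positivity, fun κ r hκ hr => ?_⟩
  have hκ2 : 1 ≤ κ ^ 2 := one_le_pow₀ hκ
  have hc2 : 2 / κ ^ 2 ≤ 2 := div_le_self zero_le_two hκ2
  have hbound := abs_mul_integral_exp_mul_potential_sub_le hVc hVl hVr hB (by positivity) hc2
    ham hap (by linarith : (1 : ℝ) ≤ r)
  simp_rw [show ∀ x, -2 * V x / κ ^ 2 = -(2 / κ ^ 2) * V x by intro; ring,
    show ∀ x, 2 * V x / κ ^ 2 = 2 / κ ^ 2 * V x by intro; ring]
  exact hbound.trans (le_of_eq_of_le (div_div_eq_mul_div _ _ _) (half_le_self (by positivity)))
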